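/- arXiv:1601.08177 — 3 statements merged into one kernel-verified Lean document; each statement's English description precedes it below -/
import Mathlib

section
/- Fix p ∈ U with dα ≠ 0 at p, and assume that E_*(p,·) is a positive definite quadratic form in y. Set b² = g_*^{kl}(p)α_kα_l = 2E_*(p, X_*(p)). Then: (i) b² ≤ 1; (ii) for every nonzero v ∈ ℝ^n which is not a scalar multiple of X_*(p), the projected vector field does not vanish at v, i.e. η^l(p,v) ≠ 0 for some index l; and (iii) the projected vector field vanishes at ±X_*(p) if and only if b² = 1. -/
/- Common framework: Finsler energies in local coordinates, following the paper's
   notation.  `x` is the base point, `y` the fiber (direction) variable. -/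

noncomputable section
open scoped BigOperators

namespace FinslerConformal

/-- Vectors in local coordinates. -/
abbrev Vec (n : ℕ) := Fin n → ℝ

/-- Functions on `U × ℝⁿ`, written with separate base and fiber variables. -/
abbrev Fn (n : ℕ) := Vec n → Vec n → ℝ

variable {n : ℕ}

/-- Partial derivative in the fiber variable `y`, in direction `i`. -/
def pdy (i : Fin n) (f : Fn n) : Fn n :=
  fun x y => fderiv ℝ (f x) y (Pi.single i 1)

/-- Partial derivative in the base variable `x`, in direction `i`. -/
def pdx (i : Fin n) (f : Fn n) : Fn n :=
  fun x y => fderiv ℝ (fun x' => f x' y) x (Pi.single i 1)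

/-- Partial derivative `α_i = ∂α/∂x^i` of a function of the position only. -/
def pda (α : Vec n → ℝ) (i : Fin n) (x : Vec n) : ℝ :=
  fderiv ℝ α x (Pi.single i 1)

/-- Riemann–Finsler metric `g_{ij} = ∂²E/∂y^i∂y^j`. -/
def gdown (E : Fn n) (i j : Fin n) : Fn n := pdy i (pdy j E)

/-- The Riemann–Finsler metric as a matrix. -/
def gmat (E : Fn n) (x y : Vec n) : Matrix (Fin n) (Fin n) ℝ :=
  Matrix.of fun i j => gdown E i j x y

/-- Inverse metric `g^{ij}`. -/
def gup (E : Fn n) (i j : Fin n) : Fn n := fun x y => (gmat E x y)⁻¹ i j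

/-- First Cartan tensor `C_{ijk} = ∂g_{ij}/∂y^k`. -/
def cartanDown (E : Fn n) (i j k : Fin n) : Fn n := pdy k (gdown E i j)

/-- `C^l_{ij} = g^{lk} C_{ijk}`. -/
def cartanUp (E : Fn n) (l i j : Fin n) : Fn n :=
  fun x y => ∑ k, gup E l k x y * cartanDown E i j k x y

/-- Geodesic spray coefficients
`G^l = ½ g^{lm}(y^k ∂²E/∂y^m∂x^k − ∂E/∂x^m)`. -/
def spray (E : Fn n) (l : Fin n) : Fn n :=
  fun x y => (1/2) * ∑ m, gup E l m x y *
    ((∑ k, y k * pdy m (pdx k E) x y) - pdx m E x y)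

/-- `G^l_i = ∂G^l/∂y^i`. -/
def sprayD1 (E : Fn n) (l i : Fin n) : Fn n := pdy i (spray E l)

/-- `G^l_{ij} = ∂G^l_i/∂y^j`. -/
def sprayD2 (E : Fn n) (l i j : Fin n) : Fn n := pdy j (sprayD1 E l i)

/-- `G^l_{ijk} = ∂G^l_{ij}/∂y^k`. -/
def sprayD3 (E : Fn n) (l i j k : Fin n) : Fn n := pdy k (sprayD2 E l i j)

/-- Mixed curvature of the Berwald connection `P^l_{ijk} = −G^l_{ijk}`. -/
def mixedCurv (E : Fn n) (l i j k : Fin n) : Fn n :=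
  fun x y => - sprayD3 E l i j k x y

/-- Landsberg tensor
`P^l_{ij} = ½ g^{lm}(∂g_{jm}/∂x^i − 2G^k_i C_{jkm} − G^k_{ij} g_{km} − G^k_{im} g_{jk})`. -/
def landsberg (E : Fn n) (l i j : Fin n) : Fn n :=
  fun x y => (1/2) * ∑ m, gup E l m x y *
    (pdx i (gdown E j m) x y
      - 2 * ∑ k, sprayD1 E k i x y * cartanDown E j k m x y
      - ∑ k, sprayD2 E k i j x y * gdown E k m x y
      - ∑ k, sprayD2 E k i m x y * gdown E j k x y)

/-- A Finsler energy on an open set `U ⊆ ℝⁿ`: `C^∞` on `U × (ℝⁿ \ {0})`,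
positively 2-homogeneous in `y`, with positive definite fiberwise Hessian. -/
structure IsFinslerEnergy (U : Set (Vec n)) (E : Fn n) : Prop where
  smooth : ContDiffOn ℝ (⊤ : ℕ∞) (fun p : Vec n × Vec n => E p.1 p.2) (U ×ˢ {y : Vec n | y ≠ 0})
  homog : ∀ x ∈ U, ∀ y : Vec n, y ≠ 0 → ∀ t : ℝ, 0 < t → E x (t • y) = t ^ 2 * E x y
  posdef : ∀ x ∈ U, ∀ y : Vec n, y ≠ 0 → (gmat E x y).PosDef

/-- Conformal change of the energy: `Ẽ = e^{2α} E`. -/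
def confE (E : Fn n) (α : Vec n → ℝ) : Fn n :=
  fun x y => Real.exp (2 * α x) * E x y

/-- `X^l = g^{lm} α_m`. -/
def Xup (E : Fn n) (α : Vec n → ℝ) (l : Fin n) : Fn n :=
  fun x y => ∑ m, gup E l m x y * pda α m x

/-- `X^l_i = ∂X^l/∂y^i`. -/
def XupD (E : Fn n) (α : Vec n → ℝ) (l i : Fin n) : Fn n := pdy i (Xup E α l)

/-- `X^l_{ij} = ∂²X^l/∂y^i∂y^j`. -/
def XupD2 (E : Fn n) (α : Vec n → ℝ) (l i j : Fin n) : Fn n := pdy j (XupD E α l i)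

/-- Difference tensor of the mixed Berwald curvatures `B^l_{ijk} = G̃^l_{ijk} − G^l_{ijk}`. -/
def Bdiff (E : Fn n) (α : Vec n → ℝ) (l i j k : Fin n) : Fn n :=
  fun x y => sprayD3 (confE E α) l i j k x y - sprayD3 E l i j k x y

/-- vv-curvature of the Cartan connection `Q^l_{ijk} = C^l_{jm}C^m_{ik} − C^l_{im}C^m_{jk}`. -/
def QUp (E : Fn n) (l i j k : Fin n) : Fn n :=
  fun x y => ∑ m, (cartanUp E l j m x y * cartanUp E m i k x y
    - cartanUp E l i m x y * cartanUp E m j k x y)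

/-- Lowered vv-curvature `Q_{pijk} = g_{pl} Q^l_{ijk}`. -/
def QDown (E : Fn n) (p i j k : Fin n) : Fn n :=
  fun x y => ∑ l, gdown E p l x y * QUp E l i j k x y

/-- `y^m α_m`. -/
def yalpha (α : Vec n → ℝ) : Fn n := fun x y => ∑ m, y m * pda α m x

/-- `X^l α_l`, the Riemann–Finsler norm square of the gradient `X`. -/
def Xalpha (E : Fn n) (α : Vec n → ℝ) : Fn n :=
  fun x y => ∑ l, Xup E α l x y * pda α l x

/-- Components of the projected vector field `η^l = X^l − ((y^mα_m)/(2E)) y^l`. -/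
def etaUp (E : Fn n) (α : Vec n → ℝ) (l : Fin n) : Fn n :=
  fun x y => Xup E α l x y - (yalpha α x y / (2 * E x y)) * y l

/-- `η = η^l α_l = X^lα_l − (y^mα_m)²/(2E)`. -/
def etaSc (E : Fn n) (α : Vec n → ℝ) : Fn n :=
  fun x y => ∑ l, etaUp E α l x y * pda α l x

/-- `W^l = X^s X^l_s`. -/
def Wup (E : Fn n) (α : Vec n → ℝ) (l : Fin n) : Fn n :=
  fun x y => ∑ s, Xup E α s x y * XupD E α l s x y

/-- The associated Riemannian energy `E_* = E · X^lα_l = E · g^{lm}α_lα_m`. -/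
def Estar (E : Fn n) (α : Vec n → ℝ) : Fn n :=
  fun x y => E x y * Xalpha E α x y

/-- Riemannian gradient `X_*^l = g_*^{lk} α_k`, with respect to a Hessian matrix `gs`. -/
def Xstar (α : Vec n → ℝ) (gs : Matrix (Fin n) (Fin n) ℝ) (p : Vec n) : Vec n :=
  fun l => ∑ k, gs⁻¹ l k * pda α k p

/-- `b² = g_*^{kl} α_k α_l`. -/
def bsq (α : Vec n → ℝ) (gs : Matrix (Fin n) (Fin n) ℝ) (p : Vec n) : ℝ :=
  ∑ k, ∑ l, gs⁻¹ k l * pda α k p * pda α l p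

/-- The paper's Gram expression
`X^i_m X^m X^s_i α_s · ( X^lα_l − (y^mα_m)²/(2E) ) − ( X^k X^j_k α_j )²`. -/
def gramEtaW (E : Fn n) (α : Vec n → ℝ) : Fn n :=
  fun x y =>
    (∑ i, Wup E α i x y * ∑ s, XupD E α s i x y * pda α s x) *
      (Xalpha E α x y - (yalpha α x y) ^ 2 / (2 * E x y))
    - (∑ k, ∑ j, Xup E α k x y * XupD E α j k x y * pda α j x) ^ 2

/-- The curvature contraction `X^j X^s_j X^a X^c X^i_m X^m Q_{aisc}`. -/
def Qcon (E : Fn n) (α : Vec n → ℝ) : Fn n :=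
  fun x y => ∑ j, ∑ s, ∑ a, ∑ c, ∑ i,
    Xup E α j x y * XupD E α s j x y * Xup E α a x y * Xup E α c x y *
      Wup E α i x y * QDown E a i s c x y

/-- `θ = (X^l_s X^s α_l)/η`. -/
def thetaFn (E : Fn n) (α : Vec n → ℝ) : Fn n :=
  fun x y => (∑ l, Wup E α l x y * pda α l x) / etaSc E α x y

end FinslerConformal

namespace FinslerConformal
open Matrix
variable {n : ℕ}

-- symmetry helper
lemma herm_symm {A : Matrix (Fin n) (Fin n) ℝ} (hA : A.IsHermitian) (i j : Fin n) :
    A i j = A j i := by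
  have := congrFun (congrFun hA.symm j) i
  simpa [Matrix.conjTranspose_apply] using this.symm

lemma dot_mulVec_symm {A : Matrix (Fin n) (Fin n) ℝ} (hA : A.IsHermitian)
    (u w : Fin n → ℝ) : u ⬝ᵥ A *ᵥ w = w ⬝ᵥ A *ᵥ u := by
  simp only [dotProduct, Matrix.mulVec, dotProduct, Finset.mul_sum]
  rw [Finset.sum_comm]
  refine Finset.sum_congr rfl fun i _ => Finset.sum_congr rfl fun j _ => ?_
  rw [herm_symm hA j i]; ring

lemma cs_ineq {A : Matrix (Fin n) (Fin n) ℝ} (hA : A.PosDef) (u w : Fin n → ℝ) :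
    (u ⬝ᵥ A *ᵥ w) ^ 2 ≤ (u ⬝ᵥ A *ᵥ u) * (w ⬝ᵥ A *ᵥ w) := by
  have hq : ∀ t : ℝ, 0 ≤ (w ⬝ᵥ A *ᵥ w) * (t * t) + (2 * (u ⬝ᵥ A *ᵥ w)) * t + u ⬝ᵥ A *ᵥ u := by
    intro t
    have h0 := hA.posSemidef.dotProduct_mulVec_nonneg (u + t • w)
    simp only [star_trivial] at h0
    have hexp : (u + t • w) ⬝ᵥ A *ᵥ (u + t • w)
        = (w ⬝ᵥ A *ᵥ w) * (t * t) + (2 * (u ⬝ᵥ A *ᵥ w)) * t + u ⬝ᵥ A *ᵥ u := by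
      have hsym := dot_mulVec_symm hA.1 w u
      simp only [Matrix.mulVec_add, Matrix.mulVec_smul, dotProduct_add, add_dotProduct,
        smul_dotProduct, dotProduct_smul, smul_eq_mul]
      rw [hsym]; ring
    rw [hexp] at h0; exact h0
  have hd := discrim_le_zero hq
  simp only [discrim] at hd
  nlinarith [hd]

lemma cs_eq {A : Matrix (Fin n) (Fin n) ℝ} (hA : A.PosDef) (u w : Fin n → ℝ)
    (h : (u ⬝ᵥ A *ᵥ w) ^ 2 = (u ⬝ᵥ A *ᵥ u) * (w ⬝ᵥ A *ᵥ w)) :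
    (w ⬝ᵥ A *ᵥ w) • u = (u ⬝ᵥ A *ᵥ w) • w := by
  set z : Fin n → ℝ := (w ⬝ᵥ A *ᵥ w) • u - (u ⬝ᵥ A *ᵥ w) • w with hz
  have hzz : z ⬝ᵥ A *ᵥ z = 0 := by
    have hsym := dot_mulVec_symm hA.1 w u
    simp only [hz, Matrix.mulVec_sub, Matrix.mulVec_smul, dotProduct_sub, sub_dotProduct,
      smul_dotProduct, dotProduct_smul, smul_eq_mul]
    rw [hsym]; linear_combination (-(w ⬝ᵥ A *ᵥ w)) * h
  by_contra hne
  have : z ≠ 0 := sub_ne_zero.mpr hne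
  have := hA.dotProduct_mulVec_pos this
  simp only [star_trivial] at this
  rw [hzz] at this; exact lt_irrefl 0 this

lemma quad_bridge (M : Matrix (Fin n) (Fin n) ℝ) (y : Fin n → ℝ) :
    ∑ i, ∑ j, M i j * y i * y j = y ⬝ᵥ M *ᵥ y := by
  simp only [dotProduct, Matrix.mulVec, Finset.mul_sum]
  exact Finset.sum_congr rfl fun i _ => Finset.sum_congr rfl fun j _ => by ring
variable {n : ℕ}

lemma vec_sum_single (y : Vec n) : y = ∑ i, (y i) • (Pi.single i 1 : Vec n) := by
  funext j
  simp [Finset.sum_apply, Pi.single_apply]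

lemma slice_contDiffAt {U : Set (Vec n)} (hU : IsOpen U) {E : Fn n} (hE : IsFinslerEnergy U E)
    {p : Vec n} (hp : p ∈ U) {y : Vec n} (hy : y ≠ 0) :
    ContDiffAt ℝ (⊤ : ℕ∞) (E p) y := by
  have hopen : IsOpen (U ×ˢ {y : Vec n | y ≠ 0}) := hU.prod isOpen_ne
  have h1 : ContDiffAt ℝ (⊤ : ℕ∞) (fun q : Vec n × Vec n => E q.1 q.2) (p, y) :=
    hE.smooth.contDiffAt (hopen.mem_nhds ⟨hp, hy⟩)
  exact h1.comp y (contDiffAt_const.prodMk contDiffAt_id)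

/-- Euler's relation: `y ⬝ g(p,y) y = 2 E(p,y)`. -/
lemma euler {U : Set (Vec n)} (hU : IsOpen U) {E : Fn n} (hE : IsFinslerEnergy U E)
    {p : Vec n} (hp : p ∈ U) {y : Vec n} (hy : y ≠ 0) :
    y ⬝ᵥ (gmat E p y) *ᵥ y = 2 * E p y := by
  set f : Vec n → ℝ := E p with hf
  set G : Vec n → (Vec n →L[ℝ] ℝ) := fun z => fderiv ℝ f z with hG
  -- step 1 : Euler first order
  have step1 : ∀ z : Vec n, z ≠ 0 → G z z = 2 * f z := by
    intro z hz
    have hdf : HasFDerivAt f (G z) z :=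
      ((slice_contDiffAt hU hE hp hz).differentiableAt (by simp)).hasFDerivAt
    have hψ : HasDerivAt (fun t : ℝ => t • z) z 1 := by
      simpa using (hasDerivAt_id (1:ℝ)).smul_const z
    have hdf1 : HasFDerivAt f (G z) ((1:ℝ) • z) := by rwa [one_smul]
    have hcomp : HasDerivAt (fun t : ℝ => f (t • z)) (G z z) 1 :=
      hdf1.comp_hasDerivAt 1 hψ
    have heq : (fun t : ℝ => t ^ 2 * f z) =ᶠ[nhds (1:ℝ)] (fun t : ℝ => f (t • z)) := by
      filter_upwards [Ioi_mem_nhds (zero_lt_one)] with t ht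
      exact (hE.homog p hp z hz t ht).symm
    have h2 : HasDerivAt (fun t : ℝ => t ^ 2 * f z) (2 * f z) 1 := by
      simpa using (hasDerivAt_pow 2 (1:ℝ)).mul_const (f z)
    have h3 : HasDerivAt (fun t : ℝ => t ^ 2 * f z) (G z z) 1 :=
      hcomp.congr_of_eventuallyEq heq
    exact (h3.unique h2) ▸ rfl
  -- step 2 : differentiate Euler's relation
  have hGy : ContDiffAt ℝ (⊤ : ℕ∞) G y :=
    (slice_contDiffAt hU hE hp hy).fderiv_right (by simp)
  set DG : Vec n →L[ℝ] (Vec n →L[ℝ] ℝ) := fderiv ℝ G y with hDG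
  have hDGy : HasFDerivAt G DG y := (hGy.differentiableAt (by simp)).hasFDerivAt
  have hfy : HasFDerivAt f (G y) y :=
    ((slice_contDiffAt hU hE hp hy).differentiableAt (by simp)).hasFDerivAt
  have hΦ : HasFDerivAt (fun z => G z z) ((G y).comp (ContinuousLinearMap.id ℝ (Vec n))
      + DG.flip y) y := hDGy.clm_apply (hasFDerivAt_id y)
  have h2f : HasFDerivAt (fun z => 2 * f z) ((2:ℝ) • (G y)) y := hfy.const_mul 2
  have heq2 : (fun z : Vec n => 2 * f z) =ᶠ[nhds y] (fun z => G z z) := by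
    filter_upwards [isOpen_ne.mem_nhds hy] with z hz
    exact (step1 z hz).symm
  have hΦ' : HasFDerivAt (fun z => G z z) ((2:ℝ) • (G y)) y :=
    h2f.congr_of_eventuallyEq heq2.symm
  have hder : (G y).comp (ContinuousLinearMap.id ℝ (Vec n)) + DG.flip y = (2:ℝ) • (G y) :=
    hΦ.unique hΦ'
  have key : DG y y = 2 * f y := by
    have := congrArg (fun L => L y) hder
    simp only [ContinuousLinearMap.add_apply, ContinuousLinearMap.comp_apply,
      ContinuousLinearMap.coe_id', id_eq, ContinuousLinearMap.flip_apply,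
      ContinuousLinearMap.smul_apply, smul_eq_mul] at this
    have h1 := step1 y hy
    linarith [this, h1]
  -- step 3 : identify gdown with DG
  have hgd : ∀ i j : Fin n, gdown E i j p y = DG (Pi.single i 1) (Pi.single j 1) := by
    intro i j
    have hev : HasFDerivAt (fun z => G z (Pi.single j 1))
        ((G y).comp (0 : Vec n →L[ℝ] Vec n) + DG.flip (Pi.single j 1)) y :=
      hDGy.clm_apply (hasFDerivAt_const (Pi.single j 1) y)
    have : gdown E i j p y
        = fderiv ℝ (fun z => G z (Pi.single j 1)) y (Pi.single i 1) := rfl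
    rw [this, hev.fderiv]
    simp
  calc y ⬝ᵥ (gmat E p y) *ᵥ y = ∑ i, ∑ j, (y i * y j) * DG (Pi.single i 1) (Pi.single j 1) := by
        simp only [dotProduct, Matrix.mulVec, dotProduct, Finset.mul_sum, gmat, Matrix.of_apply]
        refine Finset.sum_congr rfl fun i _ => Finset.sum_congr rfl fun j _ => ?_
        rw [hgd i j]; ring
    _ = DG y y := by
        conv_rhs => rw [vec_sum_single y]
        rw [map_sum]
        simp only [ContinuousLinearMap.coe_sum', Finset.sum_apply, _root_.map_smul,
          ContinuousLinearMap.smul_apply, map_sum, ContinuousLinearMap.sum_apply,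
          smul_eq_mul, Finset.mul_sum]
        rw [Finset.sum_comm]
        refine Finset.sum_congr rfl fun i _ => Finset.sum_congr rfl fun j _ => ?_
        ring
    _ = 2 * E p y := key


lemma Xup_eq (E : Fn n) (α : Vec n → ℝ) (p y : Vec n) (l : Fin n) :
    Xup E α l p y = ((gmat E p y)⁻¹ *ᵥ (fun m => pda α m p)) l := rfl

lemma Xalpha_eq (E : Fn n) (α : Vec n → ℝ) (p y : Vec n) :
    Xalpha E α p y = ((gmat E p y)⁻¹ *ᵥ (fun m => pda α m p)) ⬝ᵥ (fun m => pda α m p) := rfl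

lemma yalpha_eq (α : Vec n → ℝ) (p y : Vec n) :
    yalpha α p y = y ⬝ᵥ (fun m => pda α m p) := rfl

lemma etaUp_eq (E : Fn n) (α : Vec n → ℝ) (p y : Vec n) (l : Fin n) :
    etaUp E α l p y = ((gmat E p y)⁻¹ *ᵥ (fun m => pda α m p)) l
      - (y ⬝ᵥ (fun m => pda α m p) / (2 * E p y)) * y l := rfl

lemma quad_pos {gs : Matrix (Fin n) (Fin n) ℝ} (hpos : gs.PosDef) {y : Vec n} (hy : y ≠ 0) :
    0 < y ⬝ᵥ gs *ᵥ y := by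
  have := hpos.dotProduct_mulVec_pos hy
  simpa using this

/-- If all components of `η` vanish at `(p,y)` then `yᵀ gs y = (y·α)²`. -/
lemma zero_imp_eq {E : Fn n} {α : Vec n → ℝ} {p : Vec n}
    {gs : Matrix (Fin n) (Fin n) ℝ} (hpos : gs.PosDef)
    (hquad : ∀ y : Vec n, y ≠ 0 →
      Estar E α p y = (1/2) * ∑ i, ∑ j, gs i j * y i * y j)
    {y : Vec n} (hy : y ≠ 0) (hz : ∀ l, etaUp E α l p y = 0) :
    y ⬝ᵥ gs *ᵥ y = (y ⬝ᵥ (fun m => pda α m p)) ^ 2 := by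
  set αv : Vec n := fun m => pda α m p with hαv
  set c : ℝ := y ⬝ᵥ αv / (2 * E p y) with hc
  have hXv : ((gmat E p y)⁻¹ *ᵥ αv) = c • y := by
    funext l
    have := hz l
    rw [etaUp_eq] at this
    have : ((gmat E p y)⁻¹ *ᵥ αv) l = c * y l := by linarith [this]
    simpa using this
  have hq := hquad y hy
  rw [quad_bridge] at hq
  have hEst : Estar E α p y = E p y * (c * (y ⬝ᵥ αv)) := by
    show E p y * Xalpha E α p y = _
    rw [Xalpha_eq, ← hαv, hXv, smul_dotProduct, smul_eq_mul]
  rw [hEst] at hq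
  have hgs : 0 < y ⬝ᵥ gs *ᵥ y := quad_pos hpos hy
  have hE0 : E p y ≠ 0 := by
    intro h0; rw [h0] at hq; simp at hq; linarith
  rw [hc] at hq
  field_simp at hq
  have h2E : (2 : ℝ) * E p y ≠ 0 := by simpa using hE0
  apply mul_right_cancel₀ h2E
  rw [← hq]

/-- If `X(p,y)` is parallel to `y` and `E(p,y) ≠ 0` then `η(p,y) = 0`. -/
lemma par_imp_zero {U : Set (Vec n)} (hU : IsOpen U) {E : Fn n} (hE : IsFinslerEnergy U E)
    {p : Vec n} (hp : p ∈ U) {α : Vec n → ℝ}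
    {y : Vec n} (hy : y ≠ 0) {t : ℝ}
    (hpar : ((gmat E p y)⁻¹ *ᵥ (fun m => pda α m p)) = t • y)
    (hE0 : E p y ≠ 0) : ∀ l, etaUp E α l p y = 0 := by
  intro l
  set αv : Vec n := fun m => pda α m p with hαv
  have hdet : IsUnit (gmat E p y).det :=
    isUnit_iff_ne_zero.mpr (hE.posdef p hp y hy).det_pos.ne'
  have hrec : (gmat E p y) *ᵥ ((gmat E p y)⁻¹ *ᵥ αv) = αv := by
    rw [Matrix.mulVec_mulVec, Matrix.mul_nonsing_inv _ hdet, Matrix.one_mulVec]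
  have hαA : αv = t • ((gmat E p y) *ᵥ y) := by
    rw [← hrec, hpar, Matrix.mulVec_smul]
  have hyα : y ⬝ᵥ αv = t * (2 * E p y) := by
    rw [hαA, dotProduct_smul, smul_eq_mul, euler hU hE hp hy]
  rw [etaUp_eq, ← hαv, hpar, hyα]
  have h2E : (2 : ℝ) * E p y ≠ 0 := by simpa using hE0
  rw [mul_div_cancel_right₀ _ h2E]
  simp

/-- Lemma 2 of the paper. With `b² = g_*^{kl}(p)α_kα_l = 2E_*(p,X_*(p))`:
(i) `b² ≤ 1`; (ii) the projected vector field `η` does not vanish at any nonzero `v` that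
is not a scalar multiple of `X_*(p)`; (iii) `η` vanishes at `±X_*(p)` iff `b² = 1`. -/
theorem zeros_of_projected_vector_field
    {n : ℕ} (hn : 2 ≤ n) (U : Set (Vec n)) (hU : IsOpen U)
    (E : Fn n) (hE : IsFinslerEnergy U E)
    (α : Vec n → ℝ) (hα : ContDiffOn ℝ (⊤ : ℕ∞) α U)
    (p : Vec n) (hp : p ∈ U) (hdα : fderiv ℝ α p ≠ 0)
    (gs : Matrix (Fin n) (Fin n) ℝ) (hsym : gs.IsSymm) (hpos : gs.PosDef)
    (hquad : ∀ y : Vec n, y ≠ 0 →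
      Estar E α p y = (1/2) * ∑ i, ∑ j, gs i j * y i * y j) :
    bsq α gs p ≤ 1 ∧
    (∀ v : Vec n, v ≠ 0 → (∀ c : ℝ, v ≠ c • Xstar α gs p) →
      ∃ l, etaUp E α l p v ≠ 0) ∧
    (((∀ l, etaUp E α l p (Xstar α gs p) = 0) ∧
        (∀ l, etaUp E α l p (-Xstar α gs p) = 0)) ↔ bsq α gs p = 1) := by
  classical
  set αv : Vec n := fun m => pda α m p with hαv
  have hαv0 : αv ≠ 0 := by
    intro h0
    apply hdα
    apply ContinuousLinearMap.ext
    intro w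
    have hw : fderiv ℝ α p w = 0 := by
      conv_lhs => rw [vec_sum_single w]
      rw [map_sum]
      refine Finset.sum_eq_zero fun i _ => ?_
      rw [_root_.map_smul]
      have h1 : fderiv ℝ α p (Pi.single i 1) = αv i := rfl
      rw [h1, congrFun h0 i]
      simp
    simpa using hw
  have hdet : IsUnit gs.det := isUnit_iff_ne_zero.mpr hpos.det_pos.ne'
  set Xs : Vec n := Xstar α gs p with hXsdef
  have hXs : Xs = gs⁻¹ *ᵥ αv := rfl
  have hrec : gs *ᵥ Xs = αv := by
    rw [hXs, Matrix.mulVec_mulVec, Matrix.mul_nonsing_inv _ hdet, Matrix.one_mulVec]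
  set b2 : ℝ := bsq α gs p with hb2def
  have hb2 : b2 = αv ⬝ᵥ Xs := by
    rw [hXs]
    show (∑ k, ∑ l, gs⁻¹ k l * pda α k p * pda α l p) = _
    simp only [dotProduct, Matrix.mulVec, dotProduct, Finset.mul_sum]
    exact Finset.sum_congr rfl fun k _ => Finset.sum_congr rfl fun l _ => by ring
  have hb2' : Xs ⬝ᵥ αv = b2 := by rw [hb2, dotProduct_comm]
  have hb2pos : 0 < b2 := by
    rw [hb2, hXs]; exact quad_pos hpos.inv hαv0
  have hXs0 : Xs ≠ 0 := by
    intro h0; rw [h0] at hb2; simp at hb2; rw [hb2] at hb2pos; exact lt_irrefl 0 hb2pos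
  have hXgsX : Xs ⬝ᵥ gs *ᵥ Xs = b2 := by rw [hrec, hb2']
  have hq : ∀ y : Vec n, y ≠ 0 → 2 * (E p y * Xalpha E α p y) = y ⬝ᵥ gs *ᵥ y := by
    intro y hy
    have h1 := hquad y hy
    rw [quad_bridge] at h1
    rw [show Estar E α p y = E p y * Xalpha E α p y from rfl] at h1
    linarith
  -- Part (i)
  have parti : b2 ≤ 1 := by
    have hA := hE.posdef p hp Xs hXs0
    set A := gmat E p Xs with hAdef
    set Xv : Vec n := A⁻¹ *ᵥ αv with hXv
    have hdetA : IsUnit A.det := isUnit_iff_ne_zero.mpr hA.det_pos.ne'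
    have hArec : A *ᵥ Xv = αv := by
      rw [hXv, Matrix.mulVec_mulVec, Matrix.mul_nonsing_inv _ hdetA, Matrix.one_mulVec]
    have hcs := cs_ineq hA Xs Xv
    rw [hArec] at hcs
    have heul : Xs ⬝ᵥ A *ᵥ Xs = 2 * E p Xs := euler hU hE hp hXs0
    have hXal : Xalpha E α p Xs = Xv ⬝ᵥ αv := rfl
    have h2 : (2 * E p Xs) * (Xv ⬝ᵥ αv) = b2 := by
      have h3 := hq Xs hXs0
      rw [hXgsX, hXal] at h3
      linear_combination h3
    rw [heul, hb2', h2] at hcs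
    nlinarith [hcs, hb2pos]
  -- Part (ii)
  have partii : ∀ v : Vec n, v ≠ 0 → (∀ c : ℝ, v ≠ c • Xs) →
      ∃ l, etaUp E α l p v ≠ 0 := by
    intro v hv hnc
    by_contra hno
    push_neg at hno
    have heq := zero_imp_eq hpos hquad hv hno
    rw [← hαv] at heq
    have hvgs : 0 < v ⬝ᵥ gs *ᵥ v := quad_pos hpos hv
    have hvα2 : 0 < (v ⬝ᵥ αv) ^ 2 := heq ▸ hvgs
    have hcs := cs_ineq hpos v Xs
    rw [hrec, hb2', heq] at hcs
    have hb2one : b2 = 1 := by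
      have : 1 ≤ b2 := by nlinarith [hcs, hvα2]
      linarith [parti]
    have hceq : (v ⬝ᵥ gs *ᵥ Xs) ^ 2 = (v ⬝ᵥ gs *ᵥ v) * (Xs ⬝ᵥ gs *ᵥ Xs) := by
      rw [hrec, hb2', heq, hb2one]; ring
    have hz := cs_eq hpos v Xs hceq
    rw [hXgsX, hb2one, one_smul, hrec] at hz
    exact hnc (v ⬝ᵥ αv) hz
  refine ⟨parti, partii, ?_, ?_⟩
  · -- forward
    rintro ⟨h1, _⟩
    have heq := zero_imp_eq hpos hquad hXs0 h1
    rw [← hαv, hXgsX, hb2'] at heq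
    have h3 : b2 * (b2 - 1) = 0 := by linear_combination -heq
    rcases mul_eq_zero.mp h3 with h | h
    · exact absurd h hb2pos.ne'
    · linarith
  · -- backward
    intro hb1
    have key : ∀ w : Vec n, w ≠ 0 → w ⬝ᵥ gs *ᵥ w = 1 → (w ⬝ᵥ αv) ^ 2 = 1 →
        ∀ l, etaUp E α l p w = 0 := by
      intro w hw hwgs hwα
      have hA := hE.posdef p hp w hw
      set A := gmat E p w with hAdef
      set Xw : Vec n := A⁻¹ *ᵥ αv with hXwdef
      have hdetA : IsUnit A.det := isUnit_iff_ne_zero.mpr hA.det_pos.ne'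
      have hArec : A *ᵥ Xw = αv := by
        rw [hXwdef, Matrix.mulVec_mulVec, Matrix.mul_nonsing_inv _ hdetA, Matrix.one_mulVec]
      have hqw := hq w hw
      rw [hwgs, show Xalpha E α p w = Xw ⬝ᵥ αv from rfl] at hqw
      have hE0 : E p w ≠ 0 := by
        intro h0; rw [h0] at hqw; simp at hqw
      have heul : w ⬝ᵥ A *ᵥ w = 2 * E p w := euler hU hE hp hw
      have hceq : (w ⬝ᵥ A *ᵥ Xw) ^ 2 = (w ⬝ᵥ A *ᵥ w) * (Xw ⬝ᵥ A *ᵥ Xw) := by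
        rw [hArec, heul, hwα]
        linear_combination -hqw
      have hz := cs_eq hA w Xw hceq
      rw [hArec] at hz
      have hwα0 : w ⬝ᵥ αv ≠ 0 := by
        intro h0; rw [h0] at hwα; simp at hwα
      have hpar : Xw = ((Xw ⬝ᵥ αv) / (w ⬝ᵥ αv)) • w := by
        funext l
        have h4 := congrFun hz l
        simp only [Pi.smul_apply, smul_eq_mul] at h4 ⊢
        field_simp
        linear_combination -h4
      exact par_imp_zero hU hE hp hw hpar hE0
    constructor
    · refine key Xs hXs0 (by rw [hXgsX, hb1]) (by rw [hb2', hb1]; norm_num)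
    · refine key (-Xs) (neg_ne_zero.mpr hXs0) ?_ ?_
      · rw [Matrix.mulVec_neg, neg_dotProduct, dotProduct_neg, neg_neg, hXgsX, hb1]
      · rw [neg_dotProduct, hb2', hb1]; norm_num

end FinslerConformal
end
end

section
/- Let g ∈ (−2, 2), set h = √(1 − g²/4), and let q > 0. Then for every b > 0: arctan( (q + (g/2)b)/(hb) ) + arctan( (2b + gq)/(2hq) ) = π/2 + arctan( g/(2h) ); and for every b < 0: arctan( (q + (g/2)b)/(hb) ) + arctan( (2b + gq)/(2hq) ) = −π/2 + arctan( g/(2h) ). -/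
/-!
Write `X`, `Y` for the two arguments. Then `X + Y = (b² + gbq + q²)/(hbq)`, whose numerator is
positive because `|g| < 2`, so `X + Y` has the sign of `b`; and `h² = 1 - g²/4` gives
`XY - 1 = (g/(2h))(X + Y)`. The identity is therefore the case `(XY - 1)/(X + Y) = g/(2h)` of
`arctan X + arctan Y = ±π/2 + arctan ((XY - 1)/(X + Y))` for `±(X + Y) > 0`, which holds since the
left side minus `±π/2` lies in `(-π/2, π/2)` and has tangent `-cot (arctan X + arctan Y)`.
-/

open Real

namespace Real

theorem arctan_add_eq_pi_div_two_add_arctan {x y : ℝ} (hxy : 0 < x + y) :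
    arctan x + arctan y = π / 2 + arctan ((x * y - 1) / (x + y)) := by
  set θ := arctan x + arctan y - π / 2 with hθ
  have hlo : -(π / 2) < θ := by
    have : arctan (-y) < arctan x := arctan_strictMono (by linarith)
    rw [arctan_neg] at this
    linarith
  have hhi : θ < π / 2 := by linarith [arctan_lt_pi_div_two x, arctan_lt_pi_div_two y]
  have htan : tan θ = (x * y - 1) / (x + y) := by
    have hx := (sqrt_pos.2 (by positivity : (0 : ℝ) < 1 + x ^ 2)).ne'
    have hy := (sqrt_pos.2 (by positivity : (0 : ℝ) < 1 + y ^ 2)).ne'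
    rw [tan_eq_sin_div_cos, hθ, sin_sub_pi_div_two, cos_sub_pi_div_two, cos_add, sin_add,
      sin_arctan, cos_arctan, sin_arctan, cos_arctan]
    field_simp
    ring
  rw [← htan, arctan_tan hlo hhi, hθ]
  ring

theorem arctan_add_eq_neg_pi_div_two_add_arctan {x y : ℝ} (hxy : x + y < 0) :
    arctan x + arctan y = -(π / 2) + arctan ((x * y - 1) / (x + y)) := by
  have := arctan_add_eq_pi_div_two_add_arctan (x := -x) (y := -y) (by linarith)
  rw [arctan_neg, arctan_neg, neg_mul_neg, show -x + -y = -(x + y) by ring, div_neg,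
    arctan_neg] at this
  linarith

end Real

section Finsleroid

variable {g h q b : ℝ}

theorem sq_add_mul_add_sq_pos (hg : g ∈ Set.Ioo (-2 : ℝ) 2) (hq : q ≠ 0) :
    0 < b ^ 2 + g * b * q + q ^ 2 := by
  have hq2 : 0 < q ^ 2 := by positivity
  obtain ⟨hg1, hg2⟩ := hg
  nlinarith [sq_nonneg (b + g * q / 2), mul_pos (by linarith : 0 < 2 - g) (by linarith : 0 < 2 + g)]

theorem finsleroid_args_add (hh : h ≠ 0) (hq : q ≠ 0) (hb : b ≠ 0) :
    (q + (g / 2) * b) / (h * b) + (2 * b + g * q) / (2 * h * q)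
      = (b ^ 2 + g * b * q + q ^ 2) / (h * b * q) := by
  field_simp
  ring

theorem finsleroid_args_mul_sub_one (hh2 : h ^ 2 = 1 - g ^ 2 / 4) (hh : h ≠ 0) (hq : q ≠ 0)
    (hb : b ≠ 0) :
    (q + (g / 2) * b) / (h * b) * ((2 * b + g * q) / (2 * h * q)) - 1
      = g / (2 * h) * ((q + (g / 2) * b) / (h * b) + (2 * b + g * q) / (2 * h * q)) := by
  field_simp
  linear_combination (-4 * q * b) * hh2

theorem finsleroid_args_ratio (hg : g ∈ Set.Ioo (-2 : ℝ) 2) (hh2 : h ^ 2 = 1 - g ^ 2 / 4)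
    (hh : h ≠ 0) (hq : q ≠ 0) (hb : b ≠ 0) :
    ((q + (g / 2) * b) / (h * b) * ((2 * b + g * q) / (2 * h * q)) - 1)
        / ((q + (g / 2) * b) / (h * b) + (2 * b + g * q) / (2 * h * q))
      = g / (2 * h) := by
  have hsum : (q + (g / 2) * b) / (h * b) + (2 * b + g * q) / (2 * h * q) ≠ 0 := by
    rw [finsleroid_args_add hh hq hb]
    exact div_ne_zero (sq_add_mul_add_sq_pos hg hq).ne' (by positivity)
  rw [div_eq_iff hsum, finsleroid_args_mul_sub_one hh2 hh hq hb]

end Finsleroid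

/-- For a Finsleroid charge `g ∈ (−2,2)`, `h = √(1 − g²/4)` and `q > 0`:
for every `b > 0`,
`arctan((q + (g/2)b)/(hb)) + arctan((2b + gq)/(2hq)) = π/2 + arctan(g/(2h))`,
and for every `b < 0` the same sum equals `−π/2 + arctan(g/(2h))`. -/
theorem arctan_sum_identity (g : ℝ) (hg : g ∈ Set.Ioo (-2 : ℝ) 2)
    (h : ℝ) (hh : h = Real.sqrt (1 - g ^ 2 / 4)) (q : ℝ) (hq : 0 < q) :
    (∀ b : ℝ, 0 < b →
      Real.arctan ((q + (g / 2) * b) / (h * b))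
        + Real.arctan ((2 * b + g * q) / (2 * h * q))
      = Real.pi / 2 + Real.arctan (g / (2 * h))) ∧
    (∀ b : ℝ, b < 0 →
      Real.arctan ((q + (g / 2) * b) / (h * b))
        + Real.arctan ((2 * b + g * q) / (2 * h * q))
      = -(Real.pi / 2) + Real.arctan (g / (2 * h))) := by
  have hdisc : 0 < 1 - g ^ 2 / 4 := by nlinarith [hg.1, hg.2]
  have hpos : 0 < h := hh ▸ sqrt_pos.2 hdisc
  have hh2 : h ^ 2 = 1 - g ^ 2 / 4 := hh ▸ sq_sqrt hdisc.le
  have hratio := fun b (hb : b ≠ 0) ↦ finsleroid_args_ratio hg hh2 hpos.ne' hq.ne' hb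
  constructor
  · intro b hb
    rw [arctan_add_eq_pi_div_two_add_arctan, hratio b hb.ne']
    rw [finsleroid_args_add hpos.ne' hq.ne' hb.ne']
    exact div_pos (sq_add_mul_add_sq_pos hg hq.ne') (by positivity)
  · intro b hb
    rw [arctan_add_eq_neg_pi_div_two_add_arctan, hratio b hb.ne]
    rw [finsleroid_args_add hpos.ne' hq.ne' hb.ne]
    exact div_neg_of_pos_of_neg (sq_add_mul_add_sq_pos hg hq.ne')
      (mul_neg_of_neg_of_pos (mul_neg_of_pos_of_neg hpos hb) hq)
end

section
/- Let r > 0 and K ∈ (−4, 4). Set g = K/2, h = √(1 − g²/4), G = g/h, Φ(t) = arctan( (2t + gr)/(2hr) ), and A(t) = (K/√(16−K²)) · ( arctan( ((4t/r) + K)/√(16−K²) ) − arctan( K/√(16−K²) ) ). Then for every t ∈ ℝ: (r² + K r t/2 + t²) · e^{2A(t)} = e^{−G·arctan(G/2)} · e^{G·Φ(t)} · (t² + g r t + r²). In particular, 2A(t) = G·(Φ(t) − arctan(G/2)), so the function t ↦ (r² + Krt/2 + t²)e^{2A(t)} (the paper's metric formula along the line c(t) = v + tX_*, with b = t and q = r)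 is a constant positive multiple of the Finsleroid–Finsler energy ½ e^{GΦ}(b² + gqb + q²) evaluated at b = t, q = r. -/
noncomputable section

/-- With `g = K/2`, `h = √(1 − g²/4)`, `G = g/h`,
`Φ(t) = arctan((2t + gr)/(2hr))` and
`A(t) = (K/√(16−K²))·(arctan(((4t/r) + K)/√(16−K²)) − arctan(K/√(16−K²)))`,
one has `2A(t) = G·(Φ(t) − arctan(G/2))` and
`(r² + Krt/2 + t²)·e^{2A(t)} = e^{−G·arctan(G/2)} · e^{G·Φ(t)} · (t² + grt + r²)`
for every `t`; i.e. the paper's metric along `c(t) = v + tX_*` is a constant positive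
multiple of the Finsleroid–Finsler energy `½ e^{GΦ}(b² + gqb + q²)` at `b = t`, `q = r`. -/
theorem metric_is_finsleroid_energy (r K : ℝ) (hr : 0 < r)
    (hK : K ∈ Set.Ioo (-4 : ℝ) 4)
    (g h G : ℝ) (hg : g = K / 2) (hh : h = Real.sqrt (1 - g ^ 2 / 4)) (hG : G = g / h)
    (Φ A : ℝ → ℝ)
    (hΦ : ∀ t, Φ t = Real.arctan ((2 * t + g * r) / (2 * h * r)))
    (hA : ∀ t, A t = (K / Real.sqrt (16 - K ^ 2)) *
      (Real.arctan ((4 * t / r + K) / Real.sqrt (16 - K ^ 2))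
        - Real.arctan (K / Real.sqrt (16 - K ^ 2)))) :
    (∀ t : ℝ, 2 * A t = G * (Φ t - Real.arctan (G / 2))) ∧
    (∀ t : ℝ,
      (r ^ 2 + K * r * t / 2 + t ^ 2) * Real.exp (2 * A t) =
        Real.exp (-G * Real.arctan (G / 2)) * Real.exp (G * Φ t)
          * (t ^ 2 + g * r * t + r ^ 2)) := by
  obtain ⟨hK1, hK2⟩ := hK
  have hpos : 0 < 1 - g ^ 2 / 4 := by rw [hg]; nlinarith
  have hh0 : 0 < h := by rw [hh]; exact Real.sqrt_pos.2 hpos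
  have hs2 : h ^ 2 = 1 - g ^ 2 / 4 := by rw [hh]; exact Real.sq_sqrt hpos.le
  have hsq : Real.sqrt (16 - K ^ 2) = 4 * h := by
    rw [show (16 : ℝ) - K ^ 2 = (4 * h) ^ 2 by rw [hg] at hs2; nlinarith]
    exact Real.sqrt_sq (by positivity)
  subst hg hG
  have e2 : K / (4 * h) = K / 2 / h / 2 := by ring
  have claim1 : ∀ t : ℝ, 2 * A t = K / 2 / h * (Φ t - Real.arctan (K / 2 / h / 2)) := by
    intro t
    have e1 : (4 * t / r + K) / (4 * h) = (2 * t + K / 2 * r) / (2 * h * r) := by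
      field_simp; ring
    rw [hA, hΦ, hsq, e1, e2]; ring
  refine ⟨claim1, fun t => ?_⟩
  rw [claim1 t, show K / 2 / h * (Φ t - Real.arctan (K / 2 / h / 2)) =
      -(K / 2 / h) * Real.arctan (K / 2 / h / 2) + K / 2 / h * Φ t by ring,
    Real.exp_add]
  ring
end
end
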